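/- Let f be a regular sequence with n - f(n) → ∞, and let g and h be the Grundy sequences for Maximum and Minimum Nim respectively with rule f. Then for all n, h(n) = #{ k : 0 < k ≤ n and g(k) = 0 }. -/
import Mathlib


open Classical

noncomputable section

/-- The minimal excludant of a set of naturals. -/
def mex (S : Set ℕ) : ℕ := sInf {v | v ∉ S}

/-- A rule sequence is regular if `f 0 = 0`, `f n ≤ n`, and `f` increases by 0 or 1. -/
def Regular (f : ℕ → ℕ) : Prop :=
  f 0 = 0 ∧ (∀ n, f n ≤ n) ∧ ∀ n, f n ≤ f (n + 1) ∧ f (n + 1) ≤ f n + 1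

/-- `g` is the Grundy sequence for Maximum Nim with rule `f`:
`g n = mex { g (n - i) : 1 ≤ i ≤ f n }`. -/
def MaxNimGrundy (f g : ℕ → ℕ) : Prop :=
  ∀ n, g n = mex {v | ∃ i, 1 ≤ i ∧ i ≤ f n ∧ g (n - i) = v}

/-- `h` is the Grundy sequence for Minimum Nim with rule `f`:
`h n = mex { h i : 0 ≤ i ≤ n - f n - 1 }`. -/
def MinNimGrundy (f h : ℕ → ℕ) : Prop :=
  ∀ n, h n = mex {v | ∃ i, i + f n + 1 ≤ n ∧ h i = v}

/-- Every natural number occurs infinitely often. -/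
def Infinitive (g : ℕ → ℕ) : Prop := ∀ k, {n | g n = k}.Infinite

/-- The position of the first occurrence of `k` in `g`. -/
def firstOcc (g : ℕ → ℕ) (k : ℕ) : ℕ := sInf {n | g n = k}

/-- `n` is not the first occurrence of its value in `g`. -/
def NotFirst (g : ℕ → ℕ) (n : ℕ) : Prop := ∃ m < n, g m = g n

/-- The subsequence of `g` obtained by deleting the first occurrence of each value. -/
def Lam (g : ℕ → ℕ) : ℕ → ℕ := fun m => g (Nat.nth (NotFirst g) m)

/-- Kimberling's fractal sequences: infinitive, first occurrences in increasing
order of value (F2), and deleting first occurrences leaves the sequence unchanged (F3). -/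
def Fractal (g : ℕ → ℕ) : Prop :=
  Infinitive g ∧
  (∀ j k, j < k → firstOcc g j < firstOcc g k) ∧
  (∀ m, Lam g m = g m)

/-- The restriction `g|M`: the subsequence of terms of `g` lying in `M`. -/
def restrictSeq (g : ℕ → ℕ) (M : Set ℕ) : ℕ → ℕ :=
  fun m => g (Nat.nth (fun n => g n ∈ M) m)

/-- An interspersion: an infinitive sequence such that for `i < j` the restriction
`g|{i,j}` is an initial block of `i`'s followed by strict alternation `j, i, j, i, ...`. -/
def Interspersion (g : ℕ → ℕ) : Prop :=
  Infinitive g ∧ ∀ i j, i < j → ∃ N,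
    (∀ n < N, restrictSeq g {i, j} n = i) ∧
    ∀ n, restrictSeq g {i, j} (N + 2 * n) = j ∧
         restrictSeq g {i, j} (N + 2 * n + 1) = i

/-- `striangle g i j`: the number of occurrences of `i` strictly before the first
occurrence of `j`, not counting the occurrence `g 0 = 0` when `i = 0`. -/
def striangle (g : ℕ → ℕ) (i j : ℕ) : ℕ :=
  Set.ncard {n | g n = i ∧ n < firstOcc g j ∧ (i = 0 → n ≠ 0)}

/-- A subadditive triangle: `s i j + s j k - 1 ≤ s i k ≤ s i j + s j k` for `i < j < k`. -/
def SubadditiveTriangle (s : ℕ → ℕ → ℕ) : Prop :=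
  ∀ i j k, i < j → j < k →
    s i j + s j k ≤ s i k + 1 ∧ s i k ≤ s i j + s j k

section AuxProof

lemma mex_eq_of (S : Set ℕ) (k : ℕ) (h1 : k ∉ S) (h2 : ∀ v < k, v ∈ S) : mex S = k := by
  refine le_antisymm (Nat.sInf_le h1) ?_
  by_contra hlt
  push_neg at hlt
  have hmem : sInf {v | v ∉ S} ∈ {v | v ∉ S} := Nat.sInf_mem ⟨k, h1⟩
  exact hmem (h2 _ hlt)

lemma mex_zero_mem {S : Set ℕ} (h : mex S ≠ 0) : 0 ∈ S := by
  by_contra h0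
  exact h (Nat.le_zero.mp (Nat.sInf_le h0))

lemma mex_not_mem {S : Set ℕ} (hS : S.Finite) : mex S ∉ S :=
  Nat.sInf_mem hS.infinite_compl.nonempty

lemma mex_empty : mex (∅ : Set ℕ) = 0 :=
  le_antisymm (Nat.sInf_le (by simp)) (Nat.zero_le _)

lemma reg_sub {f : ℕ → ℕ} (hf : Regular f) : ∀ x k, f (x + k) ≤ f x + k := by
  intro x k
  induction k with
  | zero => simp
  | succ k ih =>
      calc f (x + (k + 1)) = f ((x + k) + 1) := by ring_nf
        _ ≤ f (x + k) + 1 := (hf.2.2 _).2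
        _ ≤ f x + (k + 1) := by omega

/-- The set of Grundy values reachable from `n` in Maximum Nim. -/
def maxSet (f g : ℕ → ℕ) (n : ℕ) : Set ℕ :=
  {v | ∃ i, 1 ≤ i ∧ i ≤ f n ∧ g (n - i) = v}

lemma maxSet_finite (f g : ℕ → ℕ) (n : ℕ) : (maxSet f g n).Finite := by
  apply Set.Finite.subset (Set.finite_Icc 0 n |>.image g)
  rintro v ⟨i, h1, h2, rfl⟩
  exact ⟨n - i, by simp [Nat.sub_le], rfl⟩

lemma g_zero {f g : ℕ → ℕ} (hf : Regular f) (hg : MaxNimGrundy f g) : g 0 = 0 := by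
  have h00 : f 0 = 0 := hf.1
  have := hg 0
  rw [this]
  have : {v | ∃ i, 1 ≤ i ∧ i ≤ f 0 ∧ g (0 - i) = v} = (∅ : Set ℕ) := by
    ext v
    simp only [Set.mem_setOf_eq, Set.mem_empty_iff_false, iff_false]
    rintro ⟨i, h1, h2, _⟩
    omega
  rw [this, mex_empty]

/-- Claim A: each window `[n - f n, n]` contains exactly one zero of `g`. -/
lemma claimA {f g : ℕ → ℕ} (hf : Regular f) (hg : MaxNimGrundy f g) (n : ℕ) :
    ∃! k, k ∈ Finset.Icc (n - f n) n ∧ g k = 0 := by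
  -- at most one zero in the window
  have uniq : ∀ a b, a ∈ Finset.Icc (n - f n) n → b ∈ Finset.Icc (n - f n) n →
      g a = 0 → g b = 0 → a < b → False := by
    intro a b ha hb hga hgb hab
    simp only [Finset.mem_Icc] at ha hb
    have hfb : f n ≤ f b + (n - b) := by
      have := reg_sub hf b (n - b)
      rwa [Nat.add_sub_cancel' hb.2] at this
    have hfn : f n ≤ n := hf.2.1 n
    have hi : 1 ≤ b - a ∧ b - a ≤ f b := by omega
    have h0 : (0 : ℕ) ∈ maxSet f g b := by
      refine ⟨b - a, hi.1, hi.2, ?_⟩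
      have heq : b - (b - a) = a := by omega
      rw [heq]
      exact hga
    have hne : mex (maxSet f g b) ∉ maxSet f g b := mex_not_mem (maxSet_finite f g b)
    have : g b = mex (maxSet f g b) := hg b
    rw [hgb] at this
    exact hne (this ▸ h0)
  -- existence
  by_cases hgn : g n = 0
  · refine ⟨n, ⟨by simp [Nat.sub_le], hgn⟩, ?_⟩
    rintro b ⟨hb, hgb⟩
    rcases lt_trichotomy b n with hlt | heq | hlt
    · exact absurd (uniq b n hb (by simp [Nat.sub_le]) hgb hgn hlt) (fun h => h)
    · exact heq
    · simp only [Finset.mem_Icc] at hb; omega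
  · have h0 : (0 : ℕ) ∈ maxSet f g n := mex_zero_mem (fun h => hgn ((hg n).trans h))
    obtain ⟨i, hi1, hi2, hgi⟩ := h0
    have hfn : f n ≤ n := hf.2.1 n
    have hmem : n - i ∈ Finset.Icc (n - f n) n := by
      simp only [Finset.mem_Icc]; omega
    refine ⟨n - i, ⟨hmem, hgi⟩, ?_⟩
    rintro b ⟨hb, hgb⟩
    rcases lt_trichotomy b (n - i) with hlt | heq | hlt
    · exact absurd (uniq b (n - i) hb hmem hgb hgi hlt) (fun h => h)
    · exact heq
    · exact absurd (uniq (n - i) b hmem hb hgi hgb hlt) (fun h => h)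

/-- The zero-counting function. -/
def cnt (g : ℕ → ℕ) (n : ℕ) : ℕ := ((Finset.Icc 1 n).filter (fun k => g k = 0)).card

lemma cnt_mono (g : ℕ → ℕ) : Monotone (cnt g) := by
  apply monotone_nat_of_le_succ
  intro n
  apply Finset.card_le_card
  apply Finset.filter_subset_filter
  intro x
  simp only [Finset.mem_Icc]
  omega

lemma cnt_succ (g : ℕ → ℕ) (n : ℕ) : cnt g (n + 1) ≤ cnt g n + 1 := by
  unfold cnt
  have : Finset.Icc 1 (n + 1) = insert (n + 1) (Finset.Icc 1 n) := by
    ext x; simp only [Finset.mem_Icc, Finset.mem_insert]; omega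
  rw [this, Finset.filter_insert]
  split
  · rw [Finset.card_insert_of_notMem (by simp)]
  · omega

lemma cnt_ivt (g : ℕ → ℕ) : ∀ t v, v ≤ cnt g t → ∃ i ≤ t, cnt g i = v := by
  intro t
  induction t with
  | zero =>
      intro v hv
      have : cnt g 0 = 0 := by simp [cnt]
      exact ⟨0, le_refl _, by omega⟩
  | succ t ih =>
      intro v hv
      by_cases hvc : v ≤ cnt g t
      · obtain ⟨i, hi, hci⟩ := ih v hvc
        exact ⟨i, by omega, hci⟩
      · have := cnt_succ g t
        exact ⟨t + 1, le_refl _, by omega⟩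

lemma mex_cnt_prefix (g : ℕ → ℕ) (t : ℕ) (ht : 1 ≤ t) :
    mex {v | ∃ i, i < t ∧ cnt g i = v} = cnt g (t - 1) + 1 := by
  apply mex_eq_of
  · rintro ⟨i, hi, hci⟩
    have : cnt g i ≤ cnt g (t - 1) := cnt_mono g (by omega)
    omega
  · intro v hv
    obtain ⟨i, hi, hci⟩ := cnt_ivt g (t - 1) v (by omega)
    exact ⟨i, by omega, hci⟩

end AuxProof

/-- the Minimum Nim Grundy value `h n` counts the zeros of the
Maximum Nim Grundy sequence among `g 1, ..., g n`. -/
theorem minNim_counts_maxNim_zeros (f g h : ℕ → ℕ) (hf : Regular f)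
    (hlim : Filter.Tendsto (fun n => n - f n) Filter.atTop Filter.atTop)
    (hg : MaxNimGrundy f g) (hh : MinNimGrundy f h) :
    ∀ n, h n = ((Finset.Icc 1 n).filter (fun k => g k = 0)).card := by
  have key : ∀ n, h n = cnt g n := by
    intro n
    induction n using Nat.strong_induction_on with
    | _ n IH =>
      have hfn : f n ≤ n := hf.2.1 n
      have hset : {v | ∃ i, i + f n + 1 ≤ n ∧ h i = v} =
          {v | ∃ i, i < n - f n ∧ h i = v} := by
        ext v
        constructor
        · rintro ⟨i, hi, rfl⟩; exact ⟨i, by omega, rfl⟩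
        · rintro ⟨i, hi, rfl⟩; exact ⟨i, by omega, rfl⟩
      have hhn : h n = mex {v | ∃ i, i < n - f n ∧ h i = v} := by
        rw [hh n, hset]
      by_cases ht : n - f n = 0
      · -- window is [0, n]; the unique zero there is 0 itself
        have hemp : {v | ∃ i, i < n - f n ∧ h i = v} = (∅ : Set ℕ) := by
          ext v
          simp only [Set.mem_setOf_eq, Set.mem_empty_iff_false, iff_false]
          rintro ⟨i, hi, _⟩
          omega
        rw [hhn, hemp, mex_empty]
        obtain ⟨k₀, hk₀, huniq⟩ := claimA hf hg n
        have hz : g 0 = 0 := g_zero hf hg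
        have h0win : (0 : ℕ) ∈ Finset.Icc (n - f n) n := by
          simp only [Finset.mem_Icc]; omega
        have hk0 : k₀ = 0 := (huniq 0 ⟨h0win, hz⟩).symm
        symm
        unfold cnt
        rw [Finset.card_eq_zero, Finset.filter_eq_empty_iff]
        intro k hk hgk
        have : k = 0 := by
          rw [← hk0]
          exact huniq k ⟨by simp only [Finset.mem_Icc] at hk ⊢; omega, hgk⟩
        simp only [Finset.mem_Icc] at hk
        omega
      · set t := n - f n with htdef
        have ht1 : 1 ≤ t := by omega
        have htn : t ≤ n := Nat.sub_le _ _
        -- rewrite h's mex set using the IH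
        have hset2 : {v | ∃ i, i < t ∧ h i = v} = {v | ∃ i, i < t ∧ cnt g i = v} := by
          ext v
          constructor
          · rintro ⟨i, hi, rfl⟩; exact ⟨i, hi, (IH i (by omega)).symm⟩
          · rintro ⟨i, hi, rfl⟩; exact ⟨i, hi, IH i (by omega)⟩
        have hval : h n = cnt g (t - 1) + 1 := by
          rw [hhn, hset2, mex_cnt_prefix g t ht1]
        -- now show cnt g n = cnt g (t-1) + 1 using Claim A
        obtain ⟨k₀, ⟨hk₀win, hk₀z⟩, huniq⟩ := claimA hf hg n
        have hwincard : ((Finset.Icc t n).filter (fun k => g k = 0)).card = 1 := by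
          rw [Finset.card_eq_one]
          refine ⟨k₀, ?_⟩
          ext k
          simp only [Finset.mem_filter, Finset.mem_singleton]
          constructor
          · rintro ⟨hk, hgk⟩
            exact huniq k ⟨hk, hgk⟩
          · rintro rfl
            exact ⟨hk₀win, hk₀z⟩
        have hsplit : Finset.Icc 1 n = Finset.Icc 1 (t - 1) ∪ Finset.Icc t n := by
          ext k; simp only [Finset.mem_Icc, Finset.mem_union]; omega
        have hdisj : Disjoint ((Finset.Icc 1 (t - 1)).filter (fun k => g k = 0))
            ((Finset.Icc t n).filter (fun k => g k = 0)) := by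
          rw [Finset.disjoint_left]
          intro k hk1 hk2
          simp only [Finset.mem_filter, Finset.mem_Icc] at hk1 hk2
          omega
        have hcnt : cnt g n = cnt g (t - 1) + 1 := by
          unfold cnt
          rw [hsplit, Finset.filter_union, Finset.card_union_of_disjoint hdisj, hwincard]
        rw [hval, hcnt]
  exact fun n => key n
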